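/- For real numbers s and q > 2 with (q-1)s + 1 > 0, one has exp_q(s) = min over λ > 0 of λ - λ^{2-q}(log_q λ - s), with the minimum attained at λ = exp_q(s). -/

import Mathlib

/-!
Writing `A = (q - 1) s + 1`, the objective `t - t^(2-q) (log_q t - s)` simplifies to the convex
combination `((q - 2)/(q - 1)) t + (1/(q - 1)) A t^(2-q)`, whose weights are nonnegative for
`q ≥ 2`. Weighted AM-GM bounds it below by `t^((q-2)/(q-1)) (A t^(2-q))^(1/(q-1)) = A^(1/(q-1))`,
the powers of `t` cancelling, and `log_q (exp_q s) = s` shows the bound is attained.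
-/

/-- Scalar deformed logarithm. -/
noncomputable def dlog (q t : ℝ) : ℝ := if q = 1 then Real.log t else (t ^ (q - 1) - 1) / (q - 1)

/-- Scalar deformed exponential (for `q ≠ 1`). -/
noncomputable def dexp (q s : ℝ) : ℝ := ((q - 1) * s + 1) ^ (1 / (q - 1))

variable {q s t : ℝ}

lemma dlog_of_ne_one (hq : q ≠ 1) : dlog q t = (t ^ (q - 1) - 1) / (q - 1) := if_neg hq

lemma dexp_pos (hs : 0 < (q - 1) * s + 1) : 0 < dexp q s :=
  Real.rpow_pos_of_pos hs _

lemma dexp_rpow_sub_one (hq : q ≠ 1) (hs : 0 ≤ (q - 1) * s + 1) :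
    dexp q s ^ (q - 1) = (q - 1) * s + 1 := by
  rw [dexp, ← Real.rpow_mul hs, one_div, inv_mul_cancel₀ (sub_ne_zero.mpr hq), Real.rpow_one]

lemma dlog_dexp (hq : q ≠ 1) (hs : 0 ≤ (q - 1) * s + 1) : dlog q (dexp q s) = s := by
  rw [dlog_of_ne_one hq, dexp_rpow_sub_one hq hs, add_sub_cancel_right,
    mul_div_cancel_left₀ _ (sub_ne_zero.mpr hq)]

lemma legendre_objective_eq (hq : q ≠ 1) (ht : 0 < t) :
    t - t ^ (2 - q) * (dlog q t - s) =
      (q - 2) / (q - 1) * t + 1 / (q - 1) * (((q - 1) * s + 1) * t ^ (2 - q)) := by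
  have hq1 : q - 1 ≠ 0 := sub_ne_zero.mpr hq
  have hpow : t ^ (2 - q) * t ^ (q - 1) = t := by
    rw [← Real.rpow_add ht]; norm_num
  rw [dlog_of_ne_one hq]
  field_simp
  linear_combination -hpow

lemma geom_mean_eq_dexp (hq : q ≠ 1) (hs : 0 ≤ (q - 1) * s + 1) (ht : 0 < t) :
    t ^ ((q - 2) / (q - 1)) * (((q - 1) * s + 1) * t ^ (2 - q)) ^ (1 / (q - 1)) = dexp q s := by
  have hexp : (q - 2) / (q - 1) + (2 - q) * (1 / (q - 1)) = 0 := by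
    field_simp [sub_ne_zero.mpr hq]; ring
  rw [Real.mul_rpow hs (Real.rpow_nonneg ht.le _), ← Real.rpow_mul ht.le, mul_left_comm,
    ← Real.rpow_add ht, hexp, Real.rpow_zero, mul_one, dexp]

lemma dexp_le_legendre_objective (hq : 2 ≤ q) (hs : 0 ≤ (q - 1) * s + 1) (ht : 0 < t) :
    dexp q s ≤ t - t ^ (2 - q) * (dlog q t - s) := by
  have hq1 : 0 < q - 1 := by linarith
  have hq_ne : q ≠ 1 := by linarith
  rw [legendre_objective_eq hq_ne ht, ← geom_mean_eq_dexp hq_ne hs ht]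
  exact Real.geom_mean_le_arith_mean2_weighted (div_nonneg (by linarith) hq1.le)
    (by positivity) ht.le (by positivity) (by field_simp; ring)

theorem scalar_legendre_min (q s : ℝ) (hq : 2 < q)
    (hs : 0 < (q - 1) * s + 1) :
    (∀ t : ℝ, 0 < t → dexp q s ≤ t - t ^ (2 - q) * (dlog q t - s)) ∧
    0 < dexp q s ∧
    dexp q s - (dexp q s) ^ (2 - q) * (dlog q (dexp q s) - s) = dexp q s := by
  refine ⟨fun t ht => dexp_le_legendre_objective hq.le hs.le ht, dexp_pos hs, ?_⟩
  rw [dlog_dexp (by linarith) hs.le, sub_self, mul_zero, sub_zero]
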